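/- Let X be a finite set and b a partition of X. For partitions p, p' of X, say p' is directly smaller than p for a partial order ≼ if p' ≼ p, p' ≠ p, and there is no p'' distinct from p and p' with p' ≼ p'' ≼ p. Then p' is directly smaller than p for the geodesic order ≤_b if and only if either p' is directly smaller than p for the finer-compatible order ⊐_b, or p' is directly smaller than p for the coarser-compatible order ⊣_b. -/

import Mathlib

open Sum
open scoped Classical

noncomputable section

namespace PartitionPaper

variable {X : Type*}

/-- The number of blocks of a partition of `X`, encoded as a setoid on `X`. -/
def nc (p : Setoid X) : ℕ := Nat.card (Quotient p)

/-- The geodesic distance `d(p,p') = (nc p + nc p')/2 - nc (p ⊔ p')`. -/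
def pdist (p q : Setoid X) : ℚ :=
  ((nc p : ℚ) + (nc q : ℚ)) / 2 - (nc (p ⊔ q) : ℚ)

/-- Geodesic order with base partition `b` : `p' ≤_b p`. -/
def geoLE (b p' p : Setoid X) : Prop := pdist b p' + pdist p' p = pdist b p

/-- Coarser-compatible order `p' ⊣_b p` : `p'` coarser than `p` and
`nc (p' ⊔ b) = nc (p ⊔ b)`.  (In the setoid lattice, `p ≤ p'` means `p` is finer.) -/
def coarserComp (b p' p : Setoid X) : Prop :=
  p ≤ p' ∧ nc (p' ⊔ b) = nc (p ⊔ b)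

/-- Finer-compatible order `p' ⊐_b p` : `p'` finer than `p` and
`nc p' - nc (p' ⊔ b) = nc p - nc (p ⊔ b)`. -/
def finerComp (b p' p : Setoid X) : Prop :=
  p' ≤ p ∧ (nc p' : ℤ) - (nc (p' ⊔ b) : ℤ) = (nc p : ℤ) - (nc (p ⊔ b) : ℤ)

/-- `p'` is obtained from `p` by gluing two blocks of `p` into one. -/
def IsGluing (p p' : Setoid X) : Prop := p ≤ p' ∧ nc p' + 1 = nc p

/-- The Cayley graph on partitions of `X`: an edge iff one partition is obtained
from the other by gluing two of its blocks into one. -/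
def glueGraph (X : Type*) : SimpleGraph (Setoid X) where
  Adj p q := IsGluing p q ∨ IsGluing q p
  symm := ⟨fun _ _ h => h.elim Or.inr Or.inl⟩
  loopless := by
    constructor
    intro p h
    rcases h with ⟨-, h⟩ | ⟨-, h⟩ <;> omega

/-- The segment `[p₁, p₂]` for the geodesic distance. -/
def seg (p₁ p₂ : Setoid X) : Set (Setoid X) :=
  {p | pdist p₁ p + pdist p p₂ = pdist p₁ p₂}

/-- The defect of `p'` from being on `[b, p]`. -/
def df (b p' p : Setoid X) : ℚ := pdist b p' + pdist p' p - pdist b p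

/-- Admissible one-step splits: `p'` is obtained by cutting a (pivotal) block of `p`
into two blocks in such a way that the join with `b` gains one block. -/
def Delta (b p : Setoid X) : Set (Setoid X) :=
  {p' | p' ≤ p ∧ nc p' = nc p + 1 ∧ nc (p' ⊔ b) = nc (p ⊔ b) + 1}

/-- The admissible splits `Sp_b(p) = ⋃ₘ Δ_b^m(p)`. -/
def Sp (b p : Setoid X) : Set (Setoid X) :=
  {p' | Relation.ReflTransGen (fun u v => v ∈ Delta b u) p p'}

/-- The admissible gluings `Gl_b(p)`: partitions obtained by gluing blocks of `p`
without altering the number of blocks of the join with `b`. -/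
def Gl (b p : Setoid X) : Set (Setoid X) :=
  {p' | p ≤ p' ∧ nc (p' ⊔ b) = nc (p ⊔ b)}

/-- `p'` is directly smaller than `p` for the relation `r`. -/
def DirectlySmaller (r : Setoid X → Setoid X → Prop) (p' p : Setoid X) : Prop :=
  r p' p ∧ p' ≠ p ∧ ¬ ∃ p'', p'' ≠ p ∧ p'' ≠ p' ∧ r p' p'' ∧ r p'' p

/-- The block of the partition `p` corresponding to a class `c`. -/
def blockSet (p : Setoid X) (c : Quotient p) : Set X := {x | Quotient.mk p x = c}

/-- The number of blocks of `q` contained in the block `c` of `p`. -/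
def numSubBlocks (q p : Setoid X) (c : Quotient p) : ℕ :=
  Nat.card {d : Quotient q // blockSet q d ⊆ blockSet p c}

/-- The number of blocks of `p` containing exactly `i` blocks of `q`. -/
def rcount (q p : Setoid X) (i : ℕ) : ℕ :=
  Nat.card {c : Quotient p // numSubBlocks q p c = i}

/-- The Möbius function of the refinement order:
`μ_f(q,p) = (-1)^(nc q - nc p) ∏_i ((i-1)!)^(r_i)` for `q` finer than `p`. -/
def muf (q p : Setoid X) : ℤ :=
  (-1) ^ (nc q - nc p) *
    ∏ i ∈ Finset.range (nc q + 1), ((Nat.factorial (i - 1) : ℤ)) ^ (rcount q p i)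

/-- `P_k`: partitions of `{1,…,k} ∪ {1',…,k'}`, the left summand being the
unprimed (top) row and the right summand the primed (bottom) row. -/
abbrev Pk (k : ℕ) := Setoid (Fin k ⊕ Fin k)

/-- The identity partition `id_k = {{i, i'} : 1 ≤ i ≤ k}`. -/
def idk (k : ℕ) : Pk k := Setoid.ker (Sum.elim id id)

/-- The permutation partition associated with `σ`, with blocks `{i, σ(i)'}`. -/
def permPartition {k : ℕ} (σ : Equiv.Perm (Fin k)) : Pk k :=
  Setoid.ker (Sum.elim id σ.symm)

/-- `S_k`, the set of permutation partitions. -/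
def Sk (k : ℕ) : Set (Pk k) := Set.range (permPartition (k := k))

/-- `B_k`, the set of Brauer partitions: all blocks have exactly two elements. -/
def Bk (k : ℕ) : Set (Pk k) := {p | ∀ x, Nat.card {y | p x y} = 2}

/-- Embedding of the top/bottom rows of the upper diagram `q` into the
three-row diagram (top ⊕ (middle ⊕ bottom)). -/
def upMap (k : ℕ) : Fin k ⊕ Fin k → Fin k ⊕ (Fin k ⊕ Fin k) :=
  Sum.elim Sum.inl (fun i => Sum.inr (Sum.inl i))

/-- Embedding of the top/bottom rows of the lower diagram `p` into the
three-row diagram. -/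
def downMap (k : ℕ) : Fin k ⊕ Fin k → Fin k ⊕ (Fin k ⊕ Fin k) :=
  Sum.elim (fun i => Sum.inr (Sum.inl i)) (fun i => Sum.inr (Sum.inr i))

/-- The partition of the three-row diagram obtained by stacking a diagram of `q`
on top of a diagram of `p` (identifying the bottom row of `q` with the top row
of `p`): the equivalence relation generated by the copies of `q` and `p`. -/
def stackSetoid {k : ℕ} (p q : Pk k) : Setoid (Fin k ⊕ (Fin k ⊕ Fin k)) :=
  sInf {s | ∀ x y,
    ((∃ a b, upMap k a = x ∧ upMap k b = y ∧ q a b) ∨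
     (∃ a b, downMap k a = x ∧ downMap k b = y ∧ p a b)) → s x y}

/-- The composition `p ∘ q` (a diagram of `q` stacked above a diagram of `p`),
obtained by restricting the stacked partition to the outer rows. -/
def comp {k : ℕ} (p q : Pk k) : Pk k :=
  Setoid.comap (Sum.elim Sum.inl (fun i => Sum.inr (Sum.inr i))) (stackSetoid p q)

/-- `κ(p,q)`: the number of connected components of the stacked diagram entirely
contained in the middle row. -/
def kappaP {k : ℕ} (p q : Pk k) : ℕ :=
  Nat.card {c : Quotient (stackSetoid p q) //
    ∀ x, Quotient.mk (stackSetoid p q) x = c → ∃ i : Fin k, x = Sum.inr (Sum.inl i)}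

/-- The transpose `ᵗp`, exchanging the two rows. -/
def transpose {k : ℕ} (p : Pk k) : Pk k := Setoid.comap Sum.swap p

/-- The disjoint-union partition on a sum type. -/
def sumSetoid {α β : Type*} (p : Setoid α) (q : Setoid β) : Setoid (α ⊕ β) :=
  Setoid.ker (Sum.map (Quotient.mk p) (Quotient.mk q))

/-- Reindexing of the rows for the tensor product. -/
def reindex (k l : ℕ) :
    Fin (k + l) ⊕ Fin (k + l) → (Fin k ⊕ Fin k) ⊕ (Fin l ⊕ Fin l) :=
  Sum.elim
    (fun j => Sum.elim (fun a => Sum.inl (Sum.inl a)) (fun b => Sum.inr (Sum.inl b))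
      (finSumFinEquiv.symm j))
    (fun j => Sum.elim (fun a => Sum.inl (Sum.inr a)) (fun b => Sum.inr (Sum.inr b))
      (finSumFinEquiv.symm j))

/-- The tensor product `p ⊗ q ∈ P_{k+l}`: a diagram of `p` placed to the left of
a diagram of `q`. -/
def tensor {k l : ℕ} (p : Pk k) (q : Pk l) : Pk (k + l) :=
  Setoid.comap (reindex k l) (sumSetoid p q)

/-- The `≺`-defect `η(p,q)`. -/
def eta {k : ℕ} (p q : Pk k) : ℚ :=
  pdist (idk k) p + pdist (idk k) q - pdist (idk k) (comp p q)
    - ((k : ℚ) + (nc (comp p q) : ℚ) - (nc p : ℚ) - (nc q : ℚ)) / 2 - (kappaP p q : ℚ)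

/-- The Kreweras complement of `p'` in `p`: the set of `p''` with `p = p' ∘ p''`
realizing equality in the `≺`-defect inequality. -/
def Krew {k : ℕ} (p p' : Pk k) : Set (Pk k) :=
  {p'' | comp p' p'' = p ∧ eta p' p'' = 0}

/-- `p' ≺ p` : `p'` is an admissible prefix of `p`. -/
def prec {k : ℕ} (p' p : Pk k) : Prop :=
  ∃ p'', comp p' p'' = p ∧ eta p' p'' = 0

/-- The partition of `{1,…,k}` into the orbits (cycles) of the permutation `σ`. -/
def cycleSetoid {k : ℕ} (σ : Equiv.Perm (Fin k)) : Setoid (Fin k) :=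
  ⟨σ.SameCycle,
    ⟨fun x => Equiv.Perm.SameCycle.refl σ x, fun h => h.symm, fun h₁ h₂ => h₁.trans h₂⟩⟩

/-- A partition of `{1,…,k}` is non-crossing if there are no `a < b < c < d` with
`a, c` in one block and `b, d` in a different block. -/
def NonCrossing {k : ℕ} (π : Setoid (Fin k)) : Prop :=
  ¬ ∃ a b c d : Fin k, a < b ∧ b < c ∧ c < d ∧ π a c ∧ π b d ∧ ¬ π a b

/-- The map sending a permutation partition to the partition of `{1,…,k}` into
the orbits of the corresponding bijection (the blocks of `p ⊔ id_k` restricted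
to the top row). -/
def orbitMap {k : ℕ} (p : Pk k) : Setoid (Fin k) :=
  Setoid.comap (Sum.inl : Fin k → Fin k ⊕ Fin k) (p ⊔ idk k)

/-- The permutation `(1,k+1)(2,k+2)⋯(k,2k)` of `{1,…,2k}`. -/
def tauPerm (k : ℕ) : Equiv.Perm (Fin (k + k)) :=
  (finSumFinEquiv.symm.trans (Equiv.sumComm (Fin k) (Fin k))).trans finSumFinEquiv

/-- The left part of a partition in `P_{k₁+k₂}`. -/
def leftPart {k₁ k₂ : ℕ} (p : Pk (k₁ + k₂)) : Pk k₁ :=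
  Setoid.comap (Sum.map (Fin.castAdd k₂) (Fin.castAdd k₂)) p

/-- The right part of a partition in `P_{k₁+k₂}`. -/
def rightPart {k₁ k₂ : ℕ} (p : Pk (k₁ + k₂)) : Pk k₂ :=
  Setoid.comap (Sum.map (Fin.natAdd k₁) (Fin.natAdd k₁)) p

/-- The `p`-moment `m_p(E_N) = Tr_N(E_N ᵗp)/N^{nc(p ⊔ id_k)}
`= ∑_{p'} (E_N)_{p'} N^{nc(p ⊔ p') - nc(p ⊔ id_k)}`. -/
def momentF {k : ℕ} (E : ℕ → Pk k → ℂ) (p : Pk k) (N : ℕ) : ℂ :=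
  ∑ᶠ p' : Pk k, E N p' * (N : ℂ) ^ ((nc (p ⊔ p') : ℤ) - (nc (p ⊔ idk k) : ℤ))

/-- The `p`-cumulant `κ_p(E_N) = N^{nc p - nc (p ⊔ id_k)} (E_N)_p`. -/
def cumulantF {k : ℕ} (E : ℕ → Pk k → ℂ) (p : Pk k) (N : ℕ) : ℂ :=
  (N : ℂ) ^ ((nc p : ℤ) - (nc (p ⊔ idk k) : ℤ)) * E N p

/-!
Twice the distance `d` is an integer, distinct partitions are at distance at least `1/2`, and
distance exactly `1/2` is a single gluing of two blocks. Since a gluing merges at most two blocks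
of the join with `b`, `nc q - nc (q ⊔ b)` is antitone in `q` (semimodularity), which yields the
triangle inequality. Between two distinct partitions there is always a gluing neighbour of one of
them on the segment joining them, so a cover of `≤_b` must be a single gluing step; for such a
step the geodesic condition is exactly `⊐_b` or `⊣_b`. Both of these orders are convex in the
refinement order, so their covers are single gluing steps as well.
-/

section Card

variable {p q : Setoid X}

lemma map_of_le_surjective (h : p ≤ q) : Function.Surjective (Setoid.map_of_le h) :=
  fun c => Quotient.inductionOn c fun x => ⟨Quotient.mk p x, rfl⟩

variable [Finite X]

lemma nc_le_nc_of_le (h : p ≤ q) : nc q ≤ nc p :=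
  Nat.card_le_card_of_surjective _ (map_of_le_surjective h)

lemma eq_of_le_of_nc_le (h : p ≤ q) (hn : nc p ≤ nc q) : p = q := by
  have hinj := ((map_of_le_surjective h).bijective_of_nat_card_le hn).injective
  exact le_antisymm h fun x y hxy => Quotient.exact (hinj (Quotient.sound hxy))

end Card

section Glue

lemma exists_rel_not_rel_of_le_of_ne {p q : Setoid X} (h : p ≤ q) (hne : p ≠ q) :
    ∃ x y, q x y ∧ ¬ p x y := by
  by_contra! hc
  exact hne (le_antisymm h hc)

variable (p : Setoid X) (x y : X)

/-- Merges the block of `y` into the block of `x`. -/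
def glue : Setoid X :=
  Setoid.ker fun z => if Quotient.mk p z = Quotient.mk p y then Quotient.mk p x else Quotient.mk p z

lemma le_glue : p ≤ glue p x y := fun a b hab =>
  Setoid.ker_def.mpr (by simp [Quotient.sound hab])

lemma glue_rel : glue p x y x y :=
  Setoid.ker_def.mpr (by split_ifs <;> simp_all)

lemma glue_le {q : Setoid X} (hpq : p ≤ q) (hxy : q x y) : glue p x y ≤ q := by
  intro a b hab
  have hab := Setoid.ker_def.mp hab
  have hq : ∀ {u v}, Quotient.mk p u = Quotient.mk p v → q u v := fun h => hpq (Quotient.exact h)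
  split_ifs at hab with ha hb hb
  · exact hq (ha.trans hb.symm)
  · exact q.trans' (hq ha) (q.trans' (q.symm' hxy) (hq hab))
  · exact q.trans' (hq hab) (q.trans' hxy (hq hb.symm))
  · exact hq hab

lemma glue_eq_self (hxy : p x y) : glue p x y = p :=
  le_antisymm (glue_le p x y le_rfl hxy) (le_glue p x y)

lemma glue_sup (b : Setoid X) : glue p x y ⊔ b = glue (p ⊔ b) x y := by
  have hsup := le_glue (p ⊔ b) x y
  refine le_antisymm (sup_le (glue_le p x y (le_sup_left.trans hsup) (glue_rel _ x y))
    (le_sup_right.trans hsup)) (glue_le _ x y (sup_le_sup_right (le_glue p x y) b) ?_)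
  exact le_sup_left (a := glue p x y) (glue_rel p x y)

variable [Finite X]

lemma nc_glue_add_one (hxy : ¬ p x y) : nc (glue p x y) + 1 = nc p := by
  set f : X → Quotient p := fun z =>
    if Quotient.mk p z = Quotient.mk p y then Quotient.mk p x else Quotient.mk p z
  have hne : Quotient.mk p x ≠ Quotient.mk p y := fun h => hxy (Quotient.exact h)
  have hrange : Set.range f = {Quotient.mk p y}ᶜ := by
    ext c
    refine ⟨?_, fun hc => ?_⟩
    · rintro ⟨z, rfl⟩
      simp only [f, Set.mem_compl_iff, Set.mem_singleton_iff]
      split_ifs with h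
      exacts [hne, h]
    · obtain ⟨z, rfl⟩ := Quotient.mk_surjective c
      exact ⟨z, if_neg hc⟩
  have := Fintype.ofFinite (Quotient p)
  have hcard : nc (glue p x y) = Nat.card ({Quotient.mk p y}ᶜ : Set (Quotient p)) := by
    rw [nc, glue, Nat.card_congr (Setoid.quotientKerEquivRange f), hrange]
  rw [hcard, nc, Nat.card_eq_fintype_card, Nat.card_eq_fintype_card, Fintype.card_compl_set,
    Set.card_singleton]
  have : 0 < Fintype.card (Quotient p) := Fintype.card_pos_iff.mpr ⟨Quotient.mk p y⟩
  omega

lemma nc_le_nc_glue_add_one : nc p ≤ nc (glue p x y) + 1 := by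
  by_cases hxy : p x y
  · rw [glue_eq_self p x y hxy]; omega
  · rw [nc_glue_add_one p x y hxy]

end Glue

section Gluing

variable {p q s : Setoid X}

lemma IsGluing.ne (h : IsGluing p q) : p ≠ q := by
  rintro rfl
  exact absurd h.2 (by omega)

variable [Finite X]

lemma exists_isGluing_le (h : p ≤ q) (hne : p ≠ q) : ∃ s, IsGluing p s ∧ s ≤ q := by
  obtain ⟨x, y, hq, hp⟩ := exists_rel_not_rel_of_le_of_ne h hne
  exact ⟨glue p x y, ⟨le_glue p x y, nc_glue_add_one p x y hp⟩, glue_le p x y h hq⟩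

lemma IsGluing.eq_or_eq_of_le_of_le (h : IsGluing p q) (hps : p ≤ s) (hsq : s ≤ q) :
    s = p ∨ s = q := by
  have h₁ := nc_le_nc_of_le hps
  have h₂ := nc_le_nc_of_le hsq
  by_cases hs : nc s = nc p
  · exact Or.inl (eq_of_le_of_nc_le hps hs.ge).symm
  · exact Or.inr (eq_of_le_of_nc_le hsq (by have := h.2; omega))

lemma IsGluing.nc_sup_le (h : IsGluing p q) (b : Setoid X) : nc (p ⊔ b) ≤ nc (q ⊔ b) + 1 := by
  obtain ⟨x, y, hq, hp⟩ := exists_rel_not_rel_of_le_of_ne h.1 h.ne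
  have hglue : glue p x y = q := eq_of_le_of_nc_le (glue_le p x y h.1 hq)
    (by have := nc_glue_add_one p x y hp; have := h.2; omega)
  rw [← hglue, glue_sup]
  exact nc_le_nc_glue_add_one _ x y

/-- Semimodularity of the partition lattice: `nc q - nc (q ⊔ b)` is antitone in `q`. -/
lemma nc_add_nc_sup_le (b : Setoid X) (h : p ≤ q) : nc q + nc (p ⊔ b) ≤ nc p + nc (q ⊔ b) := by
  induction hn : nc p - nc q generalizing p with
  | zero =>
    have := eq_of_le_of_nc_le h (by omega)
    subst this; omega
  | succ n ih =>
    have hpq : p ≠ q := by rintro rfl; omega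
    obtain ⟨s, hs, hsq⟩ := exists_isGluing_le h hpq
    have hs_nc := hs.2
    have hs_sup := hs.nc_sup_le b
    have := ih hsq (by omega)
    omega

end Gluing

section Distance

variable {p q : Setoid X}

lemma pdist_comm (p q : Setoid X) : pdist p q = pdist q p := by
  rw [pdist, pdist, sup_comm, add_comm]

lemma IsGluing.pdist_eq (h : IsGluing p q) : pdist p q = 1 / 2 := by
  have : (nc q + 1 : ℚ) = nc p := by exact_mod_cast h.2
  rw [pdist, sup_eq_right.mpr h.1]
  linarith

variable [Finite X]

lemma half_le_pdist (h : p ≠ q) : 1 / 2 ≤ pdist p q := by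
  have hp := nc_le_nc_of_le (le_sup_left : p ≤ p ⊔ q)
  have hq := nc_le_nc_of_le (le_sup_right : q ≤ p ⊔ q)
  have hlt : 2 * nc (p ⊔ q) + 1 ≤ nc p + nc q := by
    by_contra! hc
    exact h ((eq_of_le_of_nc_le le_sup_left (by omega)).trans
      (eq_of_le_of_nc_le le_sup_right (by omega)).symm)
  have : (2 * nc (p ⊔ q) + 1 : ℚ) ≤ nc p + nc q := by exact_mod_cast hlt
  rw [pdist]
  linarith

lemma pdist_triangle (p q r : Setoid X) : pdist p r ≤ pdist p q + pdist q r := by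
  have hsemi := nc_add_nc_sup_le p (le_sup_left : q ≤ q ⊔ r)
  have hjoin := nc_le_nc_of_le (sup_le (le_sup_right : p ≤ q ⊔ r ⊔ p)
    (le_sup_right.trans le_sup_left) : p ⊔ r ≤ q ⊔ r ⊔ p)
  have : (nc (p ⊔ q) + nc (q ⊔ r) : ℚ) ≤ nc q + nc (p ⊔ r) := by
    rw [sup_comm p q]; exact_mod_cast (by omega)
  simp only [pdist]
  linarith

lemma exists_isGluing_mem_seg_of_ne_sup (h : p ≠ p ⊔ q) : ∃ r, IsGluing p r ∧ r ∈ seg p q := by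
  obtain ⟨r, hr, hrm⟩ := exists_isGluing_le le_sup_left h
  have hsup : r ⊔ q = p ⊔ q := le_antisymm (sup_le hrm le_sup_right) (sup_le_sup_right hr.1 q)
  have : (nc r + 1 : ℚ) = nc p := by exact_mod_cast hr.2
  refine ⟨r, hr, ?_⟩
  show pdist p r + pdist r q = pdist p q
  rw [hr.pdist_eq]
  simp only [pdist, hsup]
  linarith

lemma exists_isGluing_mem_seg (h : p ≠ q) : ∃ r, (IsGluing p r ∨ IsGluing q r) ∧ r ∈ seg p q := by
  by_cases hp : p = p ⊔ q
  · have hq : q ≠ q ⊔ p := by rwa [sup_comm, ← hp, ne_comm]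
    obtain ⟨r, hr, hseg⟩ := exists_isGluing_mem_seg_of_ne_sup hq
    refine ⟨r, Or.inr hr, ?_⟩
    have hseg : pdist q r + pdist r p = pdist q p := hseg
    show pdist p r + pdist r q = pdist p q
    rw [pdist_comm p, pdist_comm r q, pdist_comm p q]
    linarith
  · obtain ⟨r, hr, hseg⟩ := exists_isGluing_mem_seg_of_ne_sup hp
    exact ⟨r, Or.inl hr, hseg⟩

end Distance

section Covers

variable {p p' : Setoid X}

lemma directlySmaller_flip {rel : Setoid X → Setoid X → Prop} :
    DirectlySmaller (flip rel) p p' ↔ DirectlySmaller rel p' p := by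
  refine ⟨fun ⟨h, hne, hcov⟩ => ⟨h, hne.symm, ?_⟩, fun ⟨h, hne, hcov⟩ => ⟨h, hne.symm, ?_⟩⟩ <;>
    exact fun ⟨s, h₁, h₂, h₃, h₄⟩ => hcov ⟨s, h₂, h₁, h₄, h₃⟩

lemma IsGluing.geoLE_iff_finerComp (b : Setoid X) (h : IsGluing p' p) :
    geoLE b p' p ↔ finerComp b p' p := by
  have hnc : (nc p + 1 : ℚ) = nc p' := by exact_mod_cast h.2
  rw [geoLE, h.pdist_eq, finerComp, and_iff_right h.1, ← @Int.cast_inj ℚ]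
  simp only [pdist, sup_comm b]
  push_cast
  constructor <;> intro <;> linarith

lemma IsGluing.geoLE_iff_coarserComp (b : Setoid X) (h : IsGluing p p') :
    geoLE b p' p ↔ coarserComp b p' p := by
  have hnc : (nc p' + 1 : ℚ) = nc p := by exact_mod_cast h.2
  rw [geoLE, pdist_comm p', h.pdist_eq, coarserComp, and_iff_right h.1, ← @Nat.cast_inj ℚ]
  simp only [pdist, sup_comm b]
  constructor <;> intro <;> linarith

variable [Finite X]

lemma directlySmaller_iff_and_isGluing {rel : Setoid X → Setoid X → Prop}
    (hle : ∀ {a c}, rel a c → a ≤ c)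
    (hconv : ∀ {a s c}, rel a c → a ≤ s → s ≤ c → rel a s ∧ rel s c) :
    DirectlySmaller rel p' p ↔ rel p' p ∧ IsGluing p' p := by
  constructor
  · rintro ⟨hrel, hne, hcov⟩
    obtain ⟨s, hs, hsp⟩ := exists_isGluing_le (hle hrel) hne
    by_cases hsp' : s = p
    · exact ⟨hrel, hsp' ▸ hs⟩
    · exact absurd ⟨s, hsp', hs.ne.symm, hconv hrel hs.1 hsp⟩ hcov
  · rintro ⟨hrel, hg⟩
    refine ⟨hrel, hg.ne, ?_⟩
    rintro ⟨s, hsp, hsp', h₁, h₂⟩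
    rcases hg.eq_or_eq_of_le_of_le (hle h₁) (hle h₂) with h | h
    exacts [hsp' h, hsp h]

lemma directlySmaller_finerComp_iff (b : Setoid X) :
    DirectlySmaller (finerComp b) p' p ↔ finerComp b p' p ∧ IsGluing p' p := by
  refine directlySmaller_iff_and_isGluing (fun h => h.1) fun {a s c} ⟨_, h⟩ has hsc => ?_
  have h₁ := nc_add_nc_sup_le b has
  have h₂ := nc_add_nc_sup_le b hsc
  exact ⟨⟨has, by omega⟩, ⟨hsc, by omega⟩⟩

lemma directlySmaller_coarserComp_iff (b : Setoid X) :
    DirectlySmaller (coarserComp b) p' p ↔ coarserComp b p' p ∧ IsGluing p p' := by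
  rw [← directlySmaller_flip]
  refine directlySmaller_iff_and_isGluing (fun h => h.1) fun {a s c} h has hsc => ?_
  have h₁ := nc_le_nc_of_le (sup_le_sup_right has b)
  have h₂ := nc_le_nc_of_le (sup_le_sup_right hsc b)
  exact ⟨⟨has, by have := h.2; omega⟩, ⟨hsc, by have := h.2; omega⟩⟩

lemma directlySmaller_geoLE_iff (b : Setoid X) :
    DirectlySmaller (geoLE b) p' p ↔ geoLE b p' p ∧ (IsGluing p' p ∨ IsGluing p p') := by
  constructor
  · rintro ⟨hgeo, hne, hcov⟩
    refine ⟨hgeo, ?_⟩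
    by_contra hglue
    obtain ⟨r, hr, hseg⟩ := exists_isGluing_mem_seg hne
    have hrp' : r ≠ p' := by
      rintro rfl
      exact hr.elim (fun h => h.ne rfl) fun h => hglue (Or.inr h)
    have hrp : r ≠ p := by
      rintro rfl
      exact hr.elim (fun h => hglue (Or.inl h)) fun h => h.ne rfl
    have hseg : pdist p' r + pdist r p = pdist p' p := hseg
    -- by the triangle inequality, `r` lies on a geodesic from `b` to `p` through `p'`
    have t₁ := pdist_triangle b p' r
    have t₂ := pdist_triangle b r p
    unfold geoLE at hgeo
    exact hcov ⟨r, hrp, hrp', by unfold geoLE; linarith, by unfold geoLE; linarith⟩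
  · rintro ⟨hgeo, hglue⟩
    have hd : pdist p' p = 1 / 2 :=
      hglue.elim IsGluing.pdist_eq fun h => (pdist_comm p' p).trans h.pdist_eq
    refine ⟨hgeo, hglue.elim IsGluing.ne fun h => h.ne.symm, ?_⟩
    rintro ⟨r, hrp, hrp', h₁, h₂⟩
    have := half_le_pdist hrp'.symm
    have := half_le_pdist hrp
    unfold geoLE at *
    linarith

end Covers

/-- Hasse diagram of the geodesic order: `p'` is directly smaller than
`p` for `≤_b` iff `p'` is directly smaller than `p` for `⊐_b` or for `⊣_b`. -/
theorem statement5 {X : Type*} [Finite X] (b p p' : Setoid X) :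
    DirectlySmaller (geoLE b) p' p ↔
      DirectlySmaller (finerComp b) p' p ∨ DirectlySmaller (coarserComp b) p' p := by
  rw [directlySmaller_geoLE_iff, directlySmaller_finerComp_iff, directlySmaller_coarserComp_iff]
  constructor
  · rintro ⟨hgeo, h | h⟩
    · exact Or.inl ⟨(h.geoLE_iff_finerComp b).1 hgeo, h⟩
    · exact Or.inr ⟨(h.geoLE_iff_coarserComp b).1 hgeo, h⟩
  · rintro (⟨hc, h⟩ | ⟨hc, h⟩)
    · exact ⟨(h.geoLE_iff_finerComp b).2 hc, Or.inl h⟩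
    · exact ⟨(h.geoLE_iff_coarserComp b).2 hc, Or.inr h⟩

end PartitionPaper
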